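/- arXiv:1703.00137 — 5 statements merged into one kernel-verified Lean document; each statement's English description precedes it below -/
import Mathlib

section
/- Let α ∈ [0,2) and let f : [0,∞) → [0,∞) be locally bounded, g : [0,∞) → [0,∞) non-decreasing, and A, B > 0 constants such that f(t) ≤ A ∫₀ᵗ (s(t−s)/t)^{−α/2} f(s) ds + B g(t) for all t ≥ 0. Then there exists a constant C depending only on α such that f(t) ≤ 2 B g(t) exp(C A^{2/(2−α)} t) for all t ≥ 0. -/
/-!
Weighted-supremum argument. With `β = α/2`, the kernel satisfies
`(s(t-s)/t)^(-β) ≤ 2^β min(s, t-s)^(-β)`, so comparing with `u^(-β) e^(-r u)` and the Gamma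
integral gives `∫₀ᵗ (s(t-s)/t)^(-β) e^(r s) ds ≤ 2^(β+1) Γ(1-β) r^(β-1) e^(r t)`. Choosing
`r ∼ A^(1/(1-β))` makes `A` times this at most `e^(r t)/2`, so `M = sup_[0,T] f(s) e^(-r s)`
satisfies `M ≤ M/2 + B g(T)`, i.e. `f(T) ≤ 2 B g(T) e^(r T)`.
-/

open MeasureTheory Set Real

lemma le_two_mul_of_forall_le_half_add {ι : Type*} {S : Set ι} {h : ι → ℝ} {c : ℝ}
    (hbdd : BddAbove (h '' S))
    (H : ∀ M, (∀ x ∈ S, h x ≤ M) → ∀ x ∈ S, h x ≤ M / 2 + c) :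
    ∀ x ∈ S, h x ≤ 2 * c := by
  intro x hx
  have hsup : ∀ y ∈ S, h y ≤ sSup (h '' S) := fun y hy => le_csSup hbdd (mem_image_of_mem h hy)
  have : sSup (h '' S) ≤ sSup (h '' S) / 2 + c :=
    csSup_le ⟨_, mem_image_of_mem h hx⟩ (forall_mem_image.2 (H _ hsup))
  linarith [hsup x hx]

section IntervalReflection

variable {G : ℝ → ℝ} {t : ℝ}

lemma MeasureTheory.IntegrableOn.comp_sub_left_Ioo (ht : 0 ≤ t) (hG : IntegrableOn G (Ioc 0 t)) :
    IntegrableOn (fun s => G (t - s)) (Ioo 0 t) := by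
  have h := ((intervalIntegrable_iff_integrableOn_Ioc_of_le ht).2 hG).comp_sub_left t
  rw [sub_zero, sub_self] at h
  exact ((intervalIntegrable_iff_integrableOn_Ioc_of_le ht).1 h.symm).mono_set
    Ioo_subset_Ioc_self

lemma setIntegral_Ioo_comp_sub_left (ht : 0 ≤ t) :
    ∫ s in Ioo 0 t, G (t - s) = ∫ s in Ioo 0 t, G s := by
  rw [← integral_Ioc_eq_integral_Ioo, ← integral_Ioc_eq_integral_Ioo,
    ← intervalIntegral.integral_of_le ht, ← intervalIntegral.integral_of_le ht,
    intervalIntegral.integral_comp_sub_left, sub_zero, sub_self]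

end IntervalReflection

section GammaIntegral

variable {β r : ℝ}

lemma integrableOn_rpow_neg_mul_exp_neg (hβ : β < 1) (hr : 0 < r) :
    IntegrableOn (fun u : ℝ => u ^ (-β) * exp (-(r * u))) (Ioi 0) := by
  simpa only [rpow_one, neg_mul] using
    integrableOn_rpow_mul_exp_neg_mul_rpow (p := 1) (s := -β) (b := r) (by linarith) one_pos hr

lemma setIntegral_Ioo_rpow_neg_mul_exp_neg_le (hβ : β < 1) (hr : 0 < r) (t : ℝ) :
    ∫ u in Ioo 0 t, u ^ (-β) * exp (-(r * u)) ≤ Gamma (1 - β) * r ^ (β - 1) := by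
  have hval : ∫ u in Ioi 0, u ^ (-β) * exp (-(r * u)) = Gamma (1 - β) * r ^ (β - 1) := by
    have h := integral_rpow_mul_exp_neg_mul_Ioi (a := 1 - β) (by linarith) hr
    rw [show 1 - β - 1 = -β by ring] at h
    rw [h, one_div, ← rpow_neg_one, ← rpow_mul hr.le, mul_comm]
    congr 2
    ring
  rw [← hval]
  refine setIntegral_mono_set (integrableOn_rpow_neg_mul_exp_neg hβ hr) ?_
    Ioo_subset_Ioi_self.eventuallyLE
  filter_upwards [ae_restrict_mem measurableSet_Ioi] with u hu
  exact mul_nonneg (rpow_nonneg (le_of_lt hu) _) (exp_pos _).le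

end GammaIntegral

section Kernel

variable {β r s t : ℝ}

lemma kernel_mul_exp_neg_le (hβ : 0 ≤ β) (hr : 0 ≤ r) (hs : s ∈ Ioo 0 t) :
    (s * (t - s) / t) ^ (-β) * exp (-(r * (t - s))) ≤
      2 ^ β * (s ^ (-β) * exp (-(r * s)) + (t - s) ^ (-β) * exp (-(r * (t - s)))) := by
  obtain ⟨hs0, hst⟩ := hs
  set m := min s (t - s)
  have hm : 0 < m := lt_min hs0 (by linarith)
  -- the larger of `s`, `t - s` is at least `t / 2`
  have hkernel : m / 2 ≤ s * (t - s) / t := by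
    rw [div_le_div_iff₀ two_pos (by linarith)]
    rcases min_choice s (t - s) with h | h <;>
      nlinarith [min_le_left s (t - s), min_le_right s (t - s)]
  have hmin : m ^ (-β) * exp (-(r * m)) ≤
      s ^ (-β) * exp (-(r * s)) + (t - s) ^ (-β) * exp (-(r * (t - s))) := by
    have h1 : 0 ≤ s ^ (-β) * exp (-(r * s)) := by positivity
    have h2 : 0 ≤ (t - s) ^ (-β) * exp (-(r * (t - s))) :=
      mul_nonneg (rpow_nonneg (by linarith) _) (exp_pos _).le
    rcases min_choice s (t - s) with h | h <;> simp only [m, h] <;> linarith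
  calc (s * (t - s) / t) ^ (-β) * exp (-(r * (t - s)))
      ≤ (m / 2) ^ (-β) * exp (-(r * m)) := by
        gcongr ?_ * exp ?_
        · exact rpow_le_rpow_of_nonpos (by positivity) hkernel (neg_nonpos.2 hβ)
        · exact neg_le_neg (mul_le_mul_of_nonneg_left (min_le_right s (t - s)) hr)
    _ = 2 ^ β * (m ^ (-β) * exp (-(r * m))) := by
        rw [div_rpow hm.le two_pos.le, rpow_neg two_pos.le, div_inv_eq_mul]
        ring
    _ ≤ _ := by gcongr

lemma kernel_mul_exp_le (hβ : 0 ≤ β) (hr : 0 ≤ r) (hs : s ∈ Ioo 0 t) :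
    (s * (t - s) / t) ^ (-β) * exp (r * s) ≤ exp (r * t) *
      (2 ^ β * (s ^ (-β) * exp (-(r * s)) + (t - s) ^ (-β) * exp (-(r * (t - s))))) := by
  have hsplit : exp (r * s) = exp (r * t) * exp (-(r * (t - s))) := by
    rw [← exp_add]; ring_nf
  rw [hsplit, mul_left_comm]
  exact mul_le_mul_of_nonneg_left (kernel_mul_exp_neg_le hβ hr hs) (exp_pos _).le

lemma kernel_nonneg (hs : s ∈ Ioo 0 t) : 0 ≤ (s * (t - s) / t) ^ (-β) :=
  rpow_nonneg (div_nonneg (mul_nonneg hs.1.le (by linarith [hs.2])) (by linarith [hs.1, hs.2])) _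

lemma setIntegral_kernel_mul_le (hβ0 : 0 ≤ β) (hβ1 : β < 1) (hr : 0 < r) {f : ℝ → ℝ} {M : ℝ}
    (hM : 0 ≤ M) (hf0 : ∀ s ∈ Ioo 0 t, 0 ≤ f s) (hfM : ∀ s ∈ Ioo 0 t, f s ≤ M * exp (r * s)) :
    ∫ s in Ioo 0 t, (s * (t - s) / t) ^ (-β) * f s ≤
      M * (2 ^ (β + 1) * Gamma (1 - β) * r ^ (β - 1)) * exp (r * t) := by
  have hΓ : 0 < Gamma (1 - β) := Gamma_pos_of_pos (by linarith)
  rcases le_or_gt t 0 with ht | ht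
  · rw [Ioo_eq_empty (by linarith), Measure.restrict_empty, integral_zero_measure]
    positivity
  have hGi := integrableOn_rpow_neg_mul_exp_neg hβ1 hr
  have hG₁ : IntegrableOn (fun s => s ^ (-β) * exp (-(r * s))) (Ioo 0 t) :=
    hGi.mono_set Ioo_subset_Ioi_self
  have hG₂ : IntegrableOn (fun s => (t - s) ^ (-β) * exp (-(r * (t - s)))) (Ioo 0 t) :=
    (hGi.mono_set Ioc_subset_Ioi_self).comp_sub_left_Ioo ht.le
  have hdom := ((hG₁.add hG₂).const_mul (2 ^ β)).const_mul (exp (r * t))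
  have hG := setIntegral_Ioo_rpow_neg_mul_exp_neg_le hβ1 hr t
  calc ∫ s in Ioo 0 t, (s * (t - s) / t) ^ (-β) * f s
      ≤ ∫ s in Ioo 0 t, M * (exp (r * t) *
          (2 ^ β * (s ^ (-β) * exp (-(r * s)) + (t - s) ^ (-β) * exp (-(r * (t - s)))))) := by
        refine integral_mono_of_nonneg ?_ (hdom.const_mul M) ?_ <;>
          filter_upwards [ae_restrict_mem measurableSet_Ioo] with s hs
        · exact mul_nonneg (kernel_nonneg hs) (hf0 s hs)
        · calc (s * (t - s) / t) ^ (-β) * f s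
              ≤ (s * (t - s) / t) ^ (-β) * (M * exp (r * s)) := by
                gcongr
                exacts [kernel_nonneg hs, hfM s hs]
            _ ≤ M * (exp (r * t) * (2 ^ β *
                (s ^ (-β) * exp (-(r * s)) + (t - s) ^ (-β) * exp (-(r * (t - s)))))) := by
                rw [mul_left_comm]
                exact mul_le_mul_of_nonneg_left (kernel_mul_exp_le hβ0 hr.le hs) hM
    _ = M * exp (r * t) * 2 ^ β * (2 * ∫ s in Ioo 0 t, s ^ (-β) * exp (-(r * s))) := by
        rw [integral_const_mul, integral_const_mul, integral_const_mul,
          integral_add hG₁ hG₂,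
          setIntegral_Ioo_comp_sub_left (G := fun u => u ^ (-β) * exp (-(r * u))) ht.le]
        ring
    _ ≤ M * exp (r * t) * 2 ^ β * (2 * (Gamma (1 - β) * r ^ (β - 1))) := by gcongr
    _ = _ := by rw [rpow_add two_pos, rpow_one]; ring

end Kernel

lemma mul_exp_neg_le_half_add_of_forall_le {β r A B T M : ℝ} {f g : ℝ → ℝ}
    (hβ0 : 0 ≤ β) (hβ1 : β < 1) (hr : 0 < r) (hA : 0 ≤ A) (hB : 0 ≤ B)
    (hAr : A * (2 ^ (β + 1) * Gamma (1 - β) * r ^ (β - 1)) ≤ 1 / 2)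
    (hf0 : ∀ t, 0 ≤ f t) (hg0 : ∀ t, 0 ≤ g t) (hg : MonotoneOn g (Ici 0))
    (hineq : ∀ t ≥ (0 : ℝ), f t ≤ A * (∫ s in Ioo 0 t, (s * (t - s) / t) ^ (-β) * f s) + B * g t)
    (hM : ∀ s ∈ Icc 0 T, f s * exp (-(r * s)) ≤ M) :
    ∀ t ∈ Icc 0 T, f t * exp (-(r * t)) ≤ M / 2 + B * g T := by
  rintro t ⟨ht0, htT⟩
  set K := 2 ^ (β + 1) * Gamma (1 - β) * r ^ (β - 1)
  have hM0 : 0 ≤ M :=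
    (mul_nonneg (hf0 0) (exp_pos _).le).trans (hM 0 ⟨le_rfl, ht0.trans htT⟩)
  have hfM : ∀ s ∈ Ioo 0 t, f s ≤ M * exp (r * s) := fun s hs => by
    have h := hM s ⟨hs.1.le, hs.2.le.trans htT⟩
    rwa [exp_neg, ← div_eq_mul_inv, div_le_iff₀ (exp_pos _)] at h
  have hI := setIntegral_kernel_mul_le hβ0 hβ1 hr hM0 (fun s _ => hf0 s) hfM
  have hgT : g t ≤ g T := hg ht0 (ht0.trans htT) htT
  have hexp : exp (-(r * t)) ≤ 1 := exp_le_one_iff.2 (by nlinarith)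
  have hexp_cancel : exp (r * t) * exp (-(r * t)) = 1 := by rw [← exp_add, add_neg_cancel, exp_zero]
  calc f t * exp (-(r * t))
      ≤ (A * (M * K * exp (r * t)) + B * g T) * exp (-(r * t)) := by
        gcongr
        exact (hineq t ht0).trans (by gcongr)
    _ = A * K * M + B * g T * exp (-(r * t)) := by
        linear_combination A * M * K * hexp_cancel
    _ ≤ M / 2 + B * g T :=
        add_le_add (by nlinarith) (mul_le_of_le_one_right (mul_nonneg hB (hg0 T)) hexp)

/-- Gronwall-type lemma: if `f t ≤ A ∫₀ᵗ (s(t−s)/t)^{−α/2} f(s) ds + B g(t)` for all `t ≥ 0`,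
with `f` nonnegative and locally bounded, `g` nonnegative and nondecreasing, then
`f t ≤ 2 B g(t) exp(C A^{2/(2−α)} t)` for a constant `C` depending only on `α`. -/
theorem stmt0 (α : ℝ) (hα0 : 0 ≤ α) (hα2 : α < 2) :
    ∃ C : ℝ, 0 < C ∧ ∀ (f g : ℝ → ℝ) (A B : ℝ), 0 < A → 0 < B →
      (∀ t, 0 ≤ f t) → (∀ t, 0 ≤ g t) →
      (∀ K : ℝ, BddAbove (f '' Icc 0 K)) →
      MonotoneOn g (Ici 0) →
      (∀ t ≥ (0:ℝ), f t ≤ A * (∫ s in Ioo 0 t, (s * (t - s) / t) ^ (-(α/2)) * f s) + B * g t) →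
      ∀ t ≥ (0:ℝ), f t ≤ 2 * B * g t * Real.exp (C * A ^ (2/(2-α)) * t) := by
  set D := 2 ^ (α / 2 + 1) * Gamma (1 - α / 2)
  have hD : 0 < D := mul_pos (by positivity) (Gamma_pos_of_pos (by linarith))
  refine ⟨(2 * D) ^ (2 / (2 - α)), by positivity, ?_⟩
  intro f g A B hA hB hf0 hg0 hfb hg hineq T hT
  set r := (2 * D * A) ^ (2 / (2 - α))
  have hr : 0 < r := by positivity
  have h2α : 2 - α ≠ 0 := by linarith
  have hAr : A * (D * r ^ (α / 2 - 1)) = 1 / 2 := by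
    rw [← rpow_mul (by positivity), show 2 / (2 - α) * (α / 2 - 1) = -1 by field_simp; ring,
      rpow_neg_one]
    field_simp
  have hbdd : BddAbove ((fun s => f s * exp (-(r * s))) '' Icc 0 T) := by
    obtain ⟨K, hK⟩ := hfb T
    refine ⟨K, forall_mem_image.2 fun s hs => ?_⟩
    exact (mul_le_of_le_one_right (hf0 s) (exp_le_one_iff.2 (by nlinarith [hs.1]))).trans
      (hK (mem_image_of_mem f hs))
  have hweighted := le_two_mul_of_forall_le_half_add hbdd
    (fun M hM => mul_exp_neg_le_half_add_of_forall_le (by linarith) (by linarith) hr hA.le hB.le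
      hAr.le hf0 hg0 hg hineq hM) T ⟨hT, le_rfl⟩
  calc f T = f T * exp (-(r * T)) * exp (r * T) := by
        rw [mul_assoc, ← exp_add, neg_add_cancel, exp_zero, mul_one]
    _ ≤ 2 * (B * g T) * exp (r * T) := by gcongr
    _ = _ := by simp only [r]; rw [mul_rpow (by positivity) hA.le]; ring
end

section
/- Let α ∈ [0,2), ρ > 0 and t > 0. Then ∫₀ᵗ (s(t−s)/t)^{−α/2} e^{−ρ(t−s)} ds ≤ 2^{1+α/2} ∫₀^∞ s^{−α/2} e^{−ρ s} ds = 2^{1+α/2} Γ(1−α/2) ρ^{−(2−α)/2}. -/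
/-!
Writing `h(u) = u^β e^{-ρu}` with `β = -α/2`, the weight `s(t-s)/t` is symmetric under
`s ↦ t - s` and is at least `min(s, t-s)/2`. On the half where `s ≤ t - s` one also has
`e^{-ρ(t-s)} ≤ e^{-ρs}`, so the integrand is at most `2^{-β} (h(s) + h(t-s))` everywhere. Both
summands integrate over `(0,t)` to `∫₀ᵗ h ≤ ∫₀^∞ h`, and the last integral is a Gamma integral.
-/

open MeasureTheory Set Real

noncomputable def gammaKernel (β ρ u : ℝ) : ℝ := u ^ β * exp (-ρ * u)

section GammaKernel

variable {β ρ : ℝ}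

lemma gammaKernel_nonneg {u : ℝ} (hu : 0 ≤ u) : 0 ≤ gammaKernel β ρ u :=
  mul_nonneg (rpow_nonneg hu _) (exp_pos _).le

lemma integrableOn_gammaKernel (hβ : -1 < β) (hρ : 0 < ρ) :
    IntegrableOn (gammaKernel β ρ) (Ioi 0) := by
  have h := integrableOn_rpow_mul_exp_neg_mul_rpow (p := 1) hβ one_pos hρ
  simp only [rpow_one] at h
  exact h

lemma integral_gammaKernel (hβ : -1 < β) (hρ : 0 < ρ) :
    ∫ u in Ioi 0, gammaKernel β ρ u = Gamma (β + 1) * ρ ^ (-(β + 1)) := by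
  have h := integral_rpow_mul_exp_neg_mul_Ioi (a := β + 1) (by linarith) hρ
  rw [add_sub_cancel_right] at h
  simp only [gammaKernel, neg_mul, h]
  rw [one_div, inv_rpow hρ.le, rpow_neg hρ.le, mul_comm]

end GammaKernel

section Reflection

variable {E : Type*} [NormedAddCommGroup E] {f : ℝ → E} {t : ℝ}

lemma integrableOn_Ioo_comp_sub_left (hf : IntegrableOn f (Ioo 0 t)) (ht : 0 ≤ t) :
    IntegrableOn (fun s ↦ f (t - s)) (Ioo 0 t) := by
  rw [← intervalIntegrable_iff_integrableOn_Ioo_of_le ht] at hf ⊢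
  simpa using (hf.comp_sub_left t).symm

lemma integral_Ioo_comp_sub_left [NormedSpace ℝ E] (f : ℝ → E) (ht : 0 ≤ t) :
    ∫ s in Ioo 0 t, f (t - s) = ∫ s in Ioo 0 t, f s := by
  simp only [← integral_Ioc_eq_integral_Ioo, ← intervalIntegral.integral_of_le ht,
    intervalIntegral.integral_comp_sub_left f t, sub_self, sub_zero]

end Reflection

lemma half_le_mul_div_add {a b : ℝ} (ha : 0 < a) (hab : a ≤ b) : a / 2 ≤ a * b / (a + b) := by
  rw [div_le_div_iff₀ two_pos (by linarith)]
  nlinarith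

lemma rpow_mul_div_add_le {a b β : ℝ} (hβ : β ≤ 0) (ha : 0 < a) (hab : a ≤ b) :
    (a * b / (a + b)) ^ β ≤ 2 ^ (-β) * a ^ β := calc
  (a * b / (a + b)) ^ β ≤ (a / 2) ^ β :=
    rpow_le_rpow_of_nonpos (by positivity) (half_le_mul_div_add ha hab) hβ
  _ = 2 ^ (-β) * a ^ β := by
    rw [div_rpow ha.le zero_le_two, rpow_neg zero_le_two, div_eq_inv_mul]

lemma rpow_mul_sub_div_mul_exp_le {β ρ s t : ℝ} (hβ : β ≤ 0) (hρ : 0 ≤ ρ) (hs : s ∈ Ioo 0 t) :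
    (s * (t - s) / t) ^ β * exp (-ρ * (t - s))
      ≤ 2 ^ (-β) * (gammaKernel β ρ s + gammaKernel β ρ (t - s)) := by
  obtain ⟨hs0, hst⟩ := hs
  have hts : 0 < t - s := by linarith
  rcases le_total s (t - s) with hle | hle
  · have hweight := rpow_mul_div_add_le hβ hs0 hle
    rw [add_sub_cancel] at hweight
    have hexp : exp (-ρ * (t - s)) ≤ exp (-ρ * s) := exp_le_exp.mpr (by nlinarith)
    calc (s * (t - s) / t) ^ β * exp (-ρ * (t - s))
        ≤ 2 ^ (-β) * s ^ β * exp (-ρ * s) :=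
          mul_le_mul hweight hexp (exp_pos _).le (by positivity)
      _ = 2 ^ (-β) * gammaKernel β ρ s := mul_assoc _ _ _
      _ ≤ _ := by gcongr; exact le_add_of_nonneg_right (gammaKernel_nonneg hts.le)
  · have hweight := rpow_mul_div_add_le hβ hts hle
    rw [sub_add_cancel, mul_comm] at hweight
    calc (s * (t - s) / t) ^ β * exp (-ρ * (t - s))
        ≤ 2 ^ (-β) * (t - s) ^ β * exp (-ρ * (t - s)) :=
          mul_le_mul_of_nonneg_right hweight (exp_pos _).le
      _ = 2 ^ (-β) * gammaKernel β ρ (t - s) := mul_assoc _ _ _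
      _ ≤ _ := by gcongr; exact le_add_of_nonneg_left (gammaKernel_nonneg hs0.le)

theorem integral_rpow_mul_sub_div_mul_exp_le {β ρ t : ℝ} (hβ0 : β ≤ 0) (hβ1 : -1 < β)
    (hρ : 0 < ρ) (ht : 0 < t) :
    ∫ s in Ioo 0 t, (s * (t - s) / t) ^ β * exp (-ρ * (t - s))
      ≤ 2 ^ (1 - β) * ∫ u in Ioi 0, gammaKernel β ρ u := by
  set h := gammaKernel β ρ
  have hInt : IntegrableOn h (Ioi 0) := integrableOn_gammaKernel hβ1 hρ
  have hIntIoo : IntegrableOn h (Ioo 0 t) := hInt.mono_set Ioo_subset_Ioi_self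
  have hIntRev : IntegrableOn (fun s ↦ h (t - s)) (Ioo 0 t) :=
    integrableOn_Ioo_comp_sub_left hIntIoo ht.le
  have hIntBound : IntegrableOn (fun s ↦ 2 ^ (-β) * (h s + h (t - s))) (Ioo 0 t) :=
    (hIntIoo.add hIntRev).const_mul _
  have hbound : ∀ s ∈ Ioo 0 t, (s * (t - s) / t) ^ β * exp (-ρ * (t - s))
      ≤ 2 ^ (-β) * (h s + h (t - s)) := fun s hs ↦
    rpow_mul_sub_div_mul_exp_le hβ0 hρ.le hs
  have hIntf : IntegrableOn (fun s ↦ (s * (t - s) / t) ^ β * exp (-ρ * (t - s))) (Ioo 0 t) := by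
    refine hIntBound.mono' (by fun_prop) ?_
    filter_upwards [ae_restrict_mem measurableSet_Ioo] with s hs
    have hweight : 0 ≤ s * (t - s) / t :=
      div_nonneg (mul_nonneg hs.1.le (by linarith [hs.2])) ht.le
    rw [norm_of_nonneg (mul_nonneg (rpow_nonneg hweight _) (exp_pos _).le)]
    exact hbound s hs
  have hmono : ∫ s in Ioo 0 t, h s ≤ ∫ u in Ioi 0, h u :=
    setIntegral_mono_set hInt ((ae_restrict_mem measurableSet_Ioi).mono fun u hu ↦
      gammaKernel_nonneg (le_of_lt hu)) Ioo_subset_Ioi_self.eventuallyLE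
  calc ∫ s in Ioo 0 t, (s * (t - s) / t) ^ β * exp (-ρ * (t - s))
      ≤ ∫ s in Ioo 0 t, 2 ^ (-β) * (h s + h (t - s)) :=
        setIntegral_mono_on hIntf hIntBound measurableSet_Ioo hbound
    _ = 2 * 2 ^ (-β) * ∫ s in Ioo 0 t, h s := by
        rw [integral_const_mul, integral_add hIntIoo hIntRev, integral_Ioo_comp_sub_left h ht.le]
        ring
    _ ≤ 2 * 2 ^ (-β) * ∫ u in Ioi 0, h u := by gcongr
    _ = 2 ^ (1 - β) * ∫ u in Ioi 0, h u := by
        rw [sub_eq_add_neg, rpow_add two_pos, rpow_one]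

/-- For `α ∈ [0,2)`, `ρ > 0`, `t > 0`:
`∫₀ᵗ (s(t−s)/t)^{−α/2} e^{−ρ(t−s)} ds ≤ 2^{1+α/2} ∫₀^∞ s^{−α/2} e^{−ρs} ds
  = 2^{1+α/2} Γ(1−α/2) ρ^{−(2−α)/2}`. -/
theorem stmt1 (α ρ t : ℝ) (hα0 : 0 ≤ α) (hα2 : α < 2) (hρ : 0 < ρ) (ht : 0 < t) :
    (∫ s in Ioo 0 t, (s * (t - s) / t) ^ (-(α/2)) * Real.exp (-ρ * (t - s)))
      ≤ 2 ^ (1 + α/2) * ∫ s in Ioi (0:ℝ), s ^ (-(α/2)) * Real.exp (-ρ * s)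
    ∧ (∫ s in Ioi (0:ℝ), s ^ (-(α/2)) * Real.exp (-ρ * s))
      = Real.Gamma (1 - α/2) * ρ ^ (-(2-α)/2) := by
  have hβ0 : -(α / 2) ≤ 0 := by linarith
  have hβ1 : -1 < -(α / 2) := by linarith
  constructor
  · have h := integral_rpow_mul_sub_div_mul_exp_le hβ0 hβ1 hρ ht
    rw [sub_neg_eq_add] at h
    exact h
  · exact (integral_gammaKernel hβ1 hρ).trans (by congr 2 <;> ring)
end

section
/- Let h : ℝ^ℓ → ℂ be square-integrable with ‖h‖_{L²} = 1 and suppose ∫_{ℝ^ℓ} |ξ|² |h(ξ)|² dξ < ∞. Then for every ξ ∈ ℝ^ℓ, |ξ|² |h∗h(ξ)|² ≤ 4 ∫_{ℝ^ℓ} |ξ′|² |h(ξ′)|² dξ′. -/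
open MeasureTheory Real

/-!
Since `‖ξ‖ ≤ ‖ξ - ξ'‖ + ‖ξ'‖`, the quantity `‖ξ‖ |h∗h(ξ)|` is bounded by the sum of the convolutions
`(‖·‖|h|) ∗ |h|` and `|h| ∗ (‖·‖|h|)` at `ξ`. By Cauchy–Schwarz and translation invariance of Lebesgue
measure, each is at most `‖‖·‖h‖_{L²} ‖h‖_{L²} = (∫ ‖ξ'‖² |h(ξ')|²)^{1/2}`; squaring gives the factor `4`.
-/

theorem integral_mul_le_sqrt_integral_sq_mul_sqrt_integral_sq {α : Type*} [MeasurableSpace α]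
    {μ : Measure α} {f g : α → ℝ} (hf0 : 0 ≤ᵐ[μ] f) (hg0 : 0 ≤ᵐ[μ] g) (hf : MemLp f 2 μ)
    (hg : MemLp g 2 μ) :
    ∫ x, f x * g x ∂μ ≤ √(∫ x, f x ^ 2 ∂μ) * √(∫ x, g x ^ 2 ∂μ) := by
  have h2 : ENNReal.ofReal 2 = 2 := by norm_num
  have := integral_mul_le_Lp_mul_Lq_of_nonneg Real.HolderConjugate.two_two hf0 hg0
    (h2 ▸ hf) (h2 ▸ hg)
  simpa only [Real.rpow_two, Real.sqrt_eq_rpow] using this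

section Convolution

variable {G : Type*} [MeasurableSpace G] [AddGroup G] [MeasurableAdd G] [MeasurableNeg G]
  {μ : Measure G} [μ.IsAddLeftInvariant] [μ.IsNegInvariant] {f g : G → ℝ}

theorem integrable_comp_sub_mul (hf : MemLp f 2 μ) (hg : MemLp g 2 μ) (ξ : G) :
    Integrable (fun x => f (ξ - x) * g x) μ :=
  (hf.comp_measurePreserving (Measure.measurePreserving_sub_left μ ξ)).integrable_mul hg

theorem integral_comp_sub_mul_le (hf0 : 0 ≤ f) (hg0 : 0 ≤ g) (hf : MemLp f 2 μ)
    (hg : MemLp g 2 μ) (ξ : G) :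
    ∫ x, f (ξ - x) * g x ∂μ ≤ √(∫ x, f x ^ 2 ∂μ) * √(∫ x, g x ^ 2 ∂μ) := by
  calc ∫ x, f (ξ - x) * g x ∂μ
      ≤ √(∫ x, f (ξ - x) ^ 2 ∂μ) * √(∫ x, g x ^ 2 ∂μ) :=
        integral_mul_le_sqrt_integral_sq_mul_sqrt_integral_sq
          (.of_forall fun x => hf0 (ξ - x)) (.of_forall hg0)
          (hf.comp_measurePreserving (Measure.measurePreserving_sub_left μ ξ)) hg
    _ = √(∫ x, f x ^ 2 ∂μ) * √(∫ x, g x ^ 2 ∂μ) := by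
        rw [integral_sub_left_eq_self (fun y => f y ^ 2) μ ξ]

end Convolution

theorem norm_mul_integral_comp_sub_mul_le {E : Type*} [NormedAddCommGroup E] [MeasurableSpace E]
    [MeasurableAdd E] [MeasurableNeg E] {μ : Measure E} [μ.IsAddLeftInvariant]
    [μ.IsNegInvariant] {u : E → ℝ} (hu0 : 0 ≤ u) (hu : MemLp u 2 μ)
    (hwu : MemLp (fun x => ‖x‖ * u x) 2 μ) (ξ : E) :
    ‖ξ‖ * ∫ x, u (ξ - x) * u x ∂μ ≤
      2 * √(∫ x, ‖x‖ ^ 2 * u x ^ 2 ∂μ) * √(∫ x, u x ^ 2 ∂μ) := by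
  set w : E → ℝ := fun x => ‖x‖ * u x
  have hw0 : 0 ≤ w := fun x => mul_nonneg (norm_nonneg x) (hu0 x)
  have hW : ∫ x, w x ^ 2 ∂μ = ∫ x, ‖x‖ ^ 2 * u x ^ 2 ∂μ := by simp only [w, mul_pow]
  have hsplit : ∀ x, ‖ξ‖ * (u (ξ - x) * u x) ≤ w (ξ - x) * u x + u (ξ - x) * w x := fun x => by
    have htri : ‖ξ‖ ≤ ‖ξ - x‖ + ‖x‖ := norm_le_norm_sub_add ξ x
    have := mul_le_mul_of_nonneg_right htri (mul_nonneg (hu0 (ξ - x)) (hu0 x))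
    simp only [w]
    linarith
  have hint₁ := integrable_comp_sub_mul hwu hu ξ
  have hint₂ := integrable_comp_sub_mul hu hwu ξ
  calc ‖ξ‖ * ∫ x, u (ξ - x) * u x ∂μ
      = ∫ x, ‖ξ‖ * (u (ξ - x) * u x) ∂μ := (integral_const_mul _ _).symm
    _ ≤ ∫ x, (w (ξ - x) * u x + u (ξ - x) * w x) ∂μ :=
        integral_mono ((integrable_comp_sub_mul hu hu ξ).const_mul _) (hint₁.add hint₂) hsplit
    _ = ∫ x, w (ξ - x) * u x ∂μ + ∫ x, u (ξ - x) * w x ∂μ := integral_add hint₁ hint₂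
    _ ≤ √(∫ x, w x ^ 2 ∂μ) * √(∫ x, u x ^ 2 ∂μ) + √(∫ x, u x ^ 2 ∂μ) * √(∫ x, w x ^ 2 ∂μ) :=
        add_le_add (integral_comp_sub_mul_le hw0 hu0 hwu hu ξ)
          (integral_comp_sub_mul_le hu0 hw0 hu hwu ξ)
    _ = 2 * √(∫ x, ‖x‖ ^ 2 * u x ^ 2 ∂μ) * √(∫ x, u x ^ 2 ∂μ) := by rw [hW]; ring

theorem stmt3_general {ℓ : ℕ} (h : EuclideanSpace ℝ (Fin ℓ) → ℂ)
    (hL2 : MemLp h 2 volume)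
    (hnorm : (∫ x, ‖h x‖ ^ 2) = 1)
    (hmom : Integrable (fun ξ' => ‖ξ'‖ ^ 2 * ‖h ξ'‖ ^ 2))
    (ξ : EuclideanSpace ℝ (Fin ℓ)) :
    ‖ξ‖ ^ 2 * ‖∫ ξ', h (ξ - ξ') * h ξ'‖ ^ 2 ≤ 4 * ∫ ξ', ‖ξ'‖ ^ 2 * ‖h ξ'‖ ^ 2 := by
  set M := ∫ ξ', ‖ξ'‖ ^ 2 * ‖h ξ'‖ ^ 2
  have hM0 : 0 ≤ M := integral_nonneg fun x => by positivity
  have hwh : MemLp (fun x => ‖x‖ * ‖h x‖) 2 volume :=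
    (memLp_two_iff_integrable_sq (continuous_norm.aestronglyMeasurable.mul hL2.1.norm)).2
      (by simpa only [Pi.mul_apply, mul_pow] using hmom)
  have hbound : ‖ξ‖ * ‖∫ ξ', h (ξ - ξ') * h ξ'‖ ≤ 2 * √M := by
    calc ‖ξ‖ * ‖∫ ξ', h (ξ - ξ') * h ξ'‖
        ≤ ‖ξ‖ * ∫ ξ', ‖h (ξ - ξ')‖ * ‖h ξ'‖ := by
          gcongr
          exact (norm_integral_le_integral_norm _).trans_eq (by simp only [norm_mul])
      _ ≤ 2 * √M * √(∫ x, ‖h x‖ ^ 2) :=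
          norm_mul_integral_comp_sub_mul_le (fun x => norm_nonneg (h x)) hL2.norm hwh ξ
      _ = 2 * √M := by rw [hnorm, sqrt_one, mul_one]
  calc ‖ξ‖ ^ 2 * ‖∫ ξ', h (ξ - ξ') * h ξ'‖ ^ 2
      = (‖ξ‖ * ‖∫ ξ', h (ξ - ξ') * h ξ'‖) ^ 2 := by ring
    _ ≤ (2 * √M) ^ 2 := by gcongr
    _ = 4 * M := by
        rw [mul_pow, sq_sqrt hM0]
        norm_num

/-- If `h ∈ L²(ℝ^ℓ; ℂ)` with `‖h‖_{L²} = 1` and `∫ |ξ|²|h(ξ)|² dξ < ∞`, then for every `ξ`: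
`|ξ|² |h∗h(ξ)|² ≤ 4 ∫ |ξ′|² |h(ξ′)|² dξ′`. -/
theorem stmt3 {ℓ : ℕ} (h : EuclideanSpace ℝ (Fin ℓ) → ℂ)
    (hmeas : Measurable h) (hL2 : MemLp h 2 volume)
    (hnorm : (∫ x, ‖h x‖ ^ 2) = 1)
    (hmom : Integrable (fun ξ' => ‖ξ'‖ ^ 2 * ‖h ξ'‖ ^ 2))
    (ξ : EuclideanSpace ℝ (Fin ℓ)) :
    ‖ξ‖ ^ 2 * ‖∫ ξ', h (ξ - ξ') * h ξ'‖ ^ 2 ≤ 4 * ∫ ξ', ‖ξ'‖ ^ 2 * ‖h ξ'‖ ^ 2 :=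
  stmt3_general h hL2 hnorm hmom ξ
end

section
/- Let μ : ℝ^ℓ → [0,∞) be measurable with ∫_{ℝ^ℓ} μ(ξ)/(1+|ξ|²) dξ < ∞ (Dalang's condition). Define the Hartree energy in Fourier mode: E_H = sup over h ∈ A of { (2π)^{−ℓ} ∫ |h∗h(ξ)|² μ(ξ) dξ − ∫ |ξ|² |h(ξ)|² dξ }, where A = { h : ℝ^ℓ → ℂ : ‖h‖_{L²} = 1, ∫ |ξ|²|h(ξ)|² dξ < ∞, conj(h(ξ)) = h(−ξ) }. Then E_H < ∞; more precisely E_H ≤ (2π)^{−ℓ} ∫_{|ξ| ≤ R} μ(ξ) dξ for any R > 0 with 4(2π)^{−ℓ} ∫_{|ξ| > R} μ(ξ)/|ξ|² dξ < 1. -/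
open MeasureTheory Set Real

/-! Write `K = h ∗ h`. Cauchy–Schwarz gives `|K| ≤ ‖h‖₂² = 1`, and splitting the weight
`|ξ| ≤ |ξ - ξ'| + |ξ'|` between the two factors of the convolution gives
`|ξ| |K(ξ)| ≤ 2 ‖h‖₂ ‖|·| h‖₂`, i.e. `|ξ|² |K(ξ)|² ≤ 4M` with `M = ∫ |ξ|² |h(ξ)|² dξ`.
Splitting `∫ |K|² μ` at `|ξ| = R` and using Dalang's condition on each piece bounds it by
`∫_{|ξ|≤R} μ + 4M ∫_{|ξ|>R} μ/|ξ|²`, and the choice of `R` lets the kinetic term `-M` absorb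
the second summand. -/

theorem memLp_two_norm_smul_of_integrable {G A : Type*} [NormedAddCommGroup G]
    [MeasurableSpace G] [OpensMeasurableSpace G] [NormedAddCommGroup A] [NormedSpace ℝ A]
    {ν : Measure G} {f : G → A} (hf : AEStronglyMeasurable f ν)
    (hfw : Integrable (fun y => ‖y‖ ^ 2 * ‖f y‖ ^ 2) ν) : MemLp (fun y => ‖y‖ • f y) 2 ν :=
  (memLp_two_iff_integrable_sq_norm (f := fun y => ‖y‖ • f y)
    (continuous_norm.aestronglyMeasurable.smul hf)).2 <| by
    simpa only [norm_smul, norm_norm, mul_pow] using hfw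

section WeightedConvolution

variable {G A : Type*} [NormedAddCommGroup G] [MeasurableSpace G] [BorelSpace G]
  {ν : Measure G} [ν.IsAddLeftInvariant] [ν.IsNegInvariant]

theorem integrable_norm_comp_sub_mul_norm {E F : Type*} [NormedAddCommGroup E]
    [NormedAddCommGroup F] {f : G → E} {g : G → F} (hf : MemLp f 2 ν) (hg : MemLp g 2 ν)
    (x : G) : Integrable (fun y => ‖f (x - y)‖ * ‖g y‖) ν :=
  ((hf.comp_measurePreserving (Measure.measurePreserving_sub_left ν x)).norm).integrable_mul
    hg.norm

theorem integral_norm_comp_sub_mul_norm_le {E : Type*} [NormedAddCommGroup E] {f g : G → E}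
    (hf : MemLp f 2 ν) (hg : MemLp g 2 ν) (x : G) :
    ∫ y, ‖f (x - y)‖ * ‖g y‖ ∂ν ≤ √(∫ y, ‖f y‖ ^ 2 ∂ν) * √(∫ y, ‖g y‖ ^ 2 ∂ν) := by
  have hfx := hf.comp_measurePreserving (Measure.measurePreserving_sub_left ν x)
  have := integral_mul_norm_le_Lp_mul_Lq (p := 2) (q := 2) HolderConjugate.two_two
    (by simpa using hfx) (by simpa using hg)
  simp only [Real.rpow_two, ← Real.sqrt_eq_rpow] at this
  simpa [Function.comp_def, integral_sub_left_eq_self (fun y => ‖f y‖ ^ 2) ν x] using this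

variable [NormedRing A] [NormedSpace ℝ A]

theorem norm_integral_comp_sub_mul_le {f g : G → A} (hf : MemLp f 2 ν) (hg : MemLp g 2 ν)
    (x : G) :
    ‖∫ y, f (x - y) * g y ∂ν‖ ≤ √(∫ y, ‖f y‖ ^ 2 ∂ν) * √(∫ y, ‖g y‖ ^ 2 ∂ν) :=
  calc ‖∫ y, f (x - y) * g y ∂ν‖ ≤ ∫ y, ‖f (x - y)‖ * ‖g y‖ ∂ν :=
        norm_integral_le_of_norm_le (integrable_norm_comp_sub_mul_norm hf hg x)
          (ae_of_all _ fun _ => norm_mul_le _ _)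
    _ ≤ _ := integral_norm_comp_sub_mul_norm_le hf hg x

theorem norm_mul_norm_integral_comp_sub_mul_le {f g : G → A} (hf : MemLp f 2 ν)
    (hg : MemLp g 2 ν) (hfw : MemLp (fun y => ‖y‖ • f y) 2 ν)
    (hgw : MemLp (fun y => ‖y‖ • g y) 2 ν) (x : G) :
    ‖x‖ * ‖∫ y, f (x - y) * g y ∂ν‖ ≤
      √(∫ y, ‖y‖ ^ 2 * ‖f y‖ ^ 2 ∂ν) * √(∫ y, ‖g y‖ ^ 2 ∂ν) +
        √(∫ y, ‖f y‖ ^ 2 ∂ν) * √(∫ y, ‖y‖ ^ 2 * ‖g y‖ ^ 2 ∂ν) := by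
  have hw (u : G → A) : ∫ y, ‖y‖ ^ 2 * ‖u y‖ ^ 2 ∂ν = ∫ y, ‖‖y‖ • u y‖ ^ 2 ∂ν := by
    simp only [norm_smul, norm_norm, mul_pow]
  have hpoint : ∀ y, ‖x‖ * (‖f (x - y)‖ * ‖g y‖) ≤
      ‖‖x - y‖ • f (x - y)‖ * ‖g y‖ + ‖f (x - y)‖ * ‖‖y‖ • g y‖ := fun y => by
    have htri : ‖x‖ ≤ ‖x - y‖ + ‖y‖ := by simpa using norm_add_le (x - y) y
    simp only [norm_smul, norm_norm]
    nlinarith [mul_le_mul_of_nonneg_right htri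
      (mul_nonneg (norm_nonneg (f (x - y))) (norm_nonneg (g y)))]
  calc ‖x‖ * ‖∫ y, f (x - y) * g y ∂ν‖ ≤ ‖x‖ * ∫ y, ‖f (x - y)‖ * ‖g y‖ ∂ν := by
        gcongr
        exact norm_integral_le_of_norm_le (integrable_norm_comp_sub_mul_norm hf hg x)
          (ae_of_all _ fun _ => norm_mul_le _ _)
    _ = ∫ y, ‖x‖ * (‖f (x - y)‖ * ‖g y‖) ∂ν := (integral_const_mul _ _).symm
    _ ≤ ∫ y, ‖‖x - y‖ • f (x - y)‖ * ‖g y‖ + ‖f (x - y)‖ * ‖‖y‖ • g y‖ ∂ν :=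
        integral_mono_of_nonneg (ae_of_all _ fun _ => by positivity)
          ((integrable_norm_comp_sub_mul_norm hfw hg x).add
            (integrable_norm_comp_sub_mul_norm hf hgw x)) (ae_of_all _ hpoint)
    _ = ∫ y, ‖‖x - y‖ • f (x - y)‖ * ‖g y‖ ∂ν + ∫ y, ‖f (x - y)‖ * ‖‖y‖ • g y‖ ∂ν :=
        integral_add (integrable_norm_comp_sub_mul_norm hfw hg x)
          (integrable_norm_comp_sub_mul_norm hf hgw x)
    _ ≤ _ := by
        rw [hw f, hw g]
        exact add_le_add (integral_norm_comp_sub_mul_norm_le hfw hg x)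
          (integral_norm_comp_sub_mul_norm_le hf hgw x)

end WeightedConvolution

section DalangCondition

variable {E : Type*} [NormedAddCommGroup E] [MeasurableSpace E] [OpensMeasurableSpace E]
  {ν : Measure E} {μ : E → ℝ}

theorem integrableOn_norm_le_of_integrable_div_one_add_sq
    (hμ : Integrable (fun ξ => μ ξ / (1 + ‖ξ‖ ^ 2)) ν) (R : ℝ) :
    IntegrableOn μ {ξ | ‖ξ‖ ≤ R} ν := by
  have hs : MeasurableSet {ξ : E | ‖ξ‖ ≤ R} := measurableSet_le measurable_norm measurable_const
  have hbdd : ∀ᵐ ξ ∂ν.restrict {ξ | ‖ξ‖ ≤ R}, ‖1 + ‖ξ‖ ^ 2‖ ≤ 1 + R ^ 2 :=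
    ae_restrict_of_forall_mem hs fun ξ (hξ : ‖ξ‖ ≤ R) => by
      rw [Real.norm_of_nonneg (by positivity)]
      gcongr
  refine IntegrableOn.congr_fun (hμ.integrableOn.bdd_mul (by fun_prop) hbdd) (fun ξ _ => ?_) hs
  field_simp

theorem integrableOn_div_sq_of_integrable_div_one_add_sq
    (hμ : Integrable (fun ξ => μ ξ / (1 + ‖ξ‖ ^ 2)) ν) {R : ℝ} (hR : 0 < R) :
    IntegrableOn (fun ξ => μ ξ / ‖ξ‖ ^ 2) {ξ | R < ‖ξ‖} ν := by
  have hs : MeasurableSet {ξ : E | R < ‖ξ‖} := measurableSet_lt measurable_const measurable_norm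
  have hbdd : ∀ᵐ ξ ∂ν.restrict {ξ | R < ‖ξ‖}, ‖(1 + ‖ξ‖ ^ 2) / ‖ξ‖ ^ 2‖ ≤ R⁻¹ ^ 2 + 1 :=
    ae_restrict_of_forall_mem hs fun ξ (hξ : R < ‖ξ‖) => by
      have hξ0 : 0 < ‖ξ‖ := hR.trans hξ
      rw [Real.norm_of_nonneg (by positivity), add_div, div_self (by positivity), one_div,
        ← inv_pow]
      gcongr
  have hmeas : Measurable fun ξ : E => (1 + ‖ξ‖ ^ 2) / ‖ξ‖ ^ 2 := by fun_prop
  refine IntegrableOn.congr_fun (hμ.integrableOn.bdd_mul hmeas.aestronglyMeasurable hbdd)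
    (fun ξ (hξ : R < ‖ξ‖) => ?_) hs
  have : 0 < ‖ξ‖ := hR.trans hξ
  field_simp

theorem integral_mul_le_of_le_one_of_sq_norm_mul_le {F : E → ℝ} {C R : ℝ} (hR : 0 < R)
    (hμ0 : ∀ ξ, 0 ≤ μ ξ) (hμ : Integrable (fun ξ => μ ξ / (1 + ‖ξ‖ ^ 2)) ν)
    (hF1 : ∀ ξ, F ξ ≤ 1) (hFC : ∀ ξ, ‖ξ‖ ^ 2 * F ξ ≤ C) :
    ∫ ξ, F ξ * μ ξ ∂ν ≤
      ∫ ξ in {ξ | ‖ξ‖ ≤ R}, μ ξ ∂ν + C * ∫ ξ in {ξ | R < ‖ξ‖}, μ ξ / ‖ξ‖ ^ 2 ∂ν := by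
  have hin : MeasurableSet {ξ : E | ‖ξ‖ ≤ R} := measurableSet_le measurable_norm measurable_const
  have hout : MeasurableSet {ξ : E | R < ‖ξ‖} := measurableSet_lt measurable_const measurable_norm
  have hcompl : {ξ : E | ‖ξ‖ ≤ R}ᶜ = {ξ | R < ‖ξ‖} := by ext; simp
  by_cases hFμ : Integrable (fun ξ => F ξ * μ ξ) ν
  swap
  · have hC : 0 ≤ C := by simpa using hFC 0
    rw [integral_undef hFμ]
    exact add_nonneg (setIntegral_nonneg hin fun ξ _ => hμ0 ξ)
      (mul_nonneg hC (integral_nonneg fun ξ => div_nonneg (hμ0 ξ) (by positivity)))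
  rw [← integral_add_compl hin hFμ, hcompl, ← integral_const_mul]
  refine add_le_add (setIntegral_mono_on hFμ.integrableOn
    (integrableOn_norm_le_of_integrable_div_one_add_sq hμ R) hin fun ξ _ =>
      mul_le_of_le_one_left (hμ0 ξ) (hF1 ξ)) ?_
  refine setIntegral_mono_on hFμ.integrableOn
    ((integrableOn_div_sq_of_integrable_div_one_add_sq hμ hR).const_mul C) hout
    fun ξ (hξ : R < ‖ξ‖) => ?_
  have hξ0 : 0 < ‖ξ‖ ^ 2 := by have := hR.trans hξ; positivity
  rw [← mul_div_assoc, le_div_iff₀ hξ0, mul_right_comm, mul_comm (F ξ)]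
  exact mul_le_mul_of_nonneg_right (hFC ξ) (hμ0 ξ)

end DalangCondition

theorem stmt4_general {ℓ : ℕ} (μ : EuclideanSpace ℝ (Fin ℓ) → ℝ)
    (hμ0 : ∀ ξ, 0 ≤ μ ξ)
    (hDalang : Integrable (fun ξ => μ ξ / (1 + ‖ξ‖ ^ 2)))
    (R : ℝ) (hR : 0 < R)
    (hRsmall : 4 * (2 * π) ^ (-(ℓ:ℝ)) * (∫ ξ in {ξ | R < ‖ξ‖}, μ ξ / ‖ξ‖ ^ 2) < 1)
    (h : EuclideanSpace ℝ (Fin ℓ) → ℂ) (hh : MemLp h 2 volume)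
    (hhnorm : (∫ ξ, ‖h ξ‖ ^ 2) = 1)
    (hhmom : Integrable (fun ξ => ‖ξ‖ ^ 2 * ‖h ξ‖ ^ 2)) :
    (2 * π) ^ (-(ℓ:ℝ)) * (∫ ξ, ‖∫ ξ', h (ξ - ξ') * h ξ'‖ ^ 2 * μ ξ)
      - (∫ ξ, ‖ξ‖ ^ 2 * ‖h ξ‖ ^ 2)
      ≤ (2 * π) ^ (-(ℓ:ℝ)) * ∫ ξ in {ξ | ‖ξ‖ ≤ R}, μ ξ := by
  set M := ∫ ξ, ‖ξ‖ ^ 2 * ‖h ξ‖ ^ 2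
  have hM0 : 0 ≤ M := integral_nonneg fun ξ => by positivity
  have hhw := memLp_two_norm_smul_of_integrable hh.1 hhmom
  have hK1 (ξ : EuclideanSpace ℝ (Fin ℓ)) : ‖∫ ξ', h (ξ - ξ') * h ξ'‖ ^ 2 ≤ 1 := by
    have := norm_integral_comp_sub_mul_le hh hh ξ
    rw [hhnorm, Real.sqrt_one, mul_one] at this
    exact pow_le_one₀ (norm_nonneg _) this
  have hK2 (ξ : EuclideanSpace ℝ (Fin ℓ)) : ‖ξ‖ ^ 2 * ‖∫ ξ', h (ξ - ξ') * h ξ'‖ ^ 2 ≤ 4 * M := by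
    have := norm_mul_norm_integral_comp_sub_mul_le hh hh hhw hhw ξ
    rw [hhnorm, Real.sqrt_one, mul_one, one_mul] at this
    calc ‖ξ‖ ^ 2 * ‖∫ ξ', h (ξ - ξ') * h ξ'‖ ^ 2 = (‖ξ‖ * ‖∫ ξ', h (ξ - ξ') * h ξ'‖) ^ 2 := by ring
      _ ≤ (√M + √M) ^ 2 := by gcongr
      _ = 4 * M := by rw [← two_mul, mul_pow, Real.sq_sqrt hM0]; norm_num
  have hsplit := integral_mul_le_of_le_one_of_sq_norm_mul_le hR hμ0 hDalang hK1 hK2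
  have hc : 0 < (2 * π) ^ (-(ℓ:ℝ)) := by positivity
  nlinarith [mul_le_mul_of_nonneg_left hsplit hc.le, mul_le_mul_of_nonneg_right hRsmall.le hM0]

/-- Under Dalang's condition, the Hartree energy in Fourier mode is finite: for any `R > 0`
with `4(2π)^{−ℓ} ∫_{|ξ|>R} μ(ξ)/|ξ|² dξ < 1`, every `h` in the admissible class `A` satisfies
`(2π)^{−ℓ} ∫ |h∗h(ξ)|² μ(ξ) dξ − ∫ |ξ|²|h(ξ)|² dξ ≤ (2π)^{−ℓ} ∫_{|ξ|≤R} μ(ξ) dξ`. -/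
theorem stmt4 {ℓ : ℕ} (μ : EuclideanSpace ℝ (Fin ℓ) → ℝ)
    (hμmeas : Measurable μ) (hμ0 : ∀ ξ, 0 ≤ μ ξ)
    (hDalang : Integrable (fun ξ => μ ξ / (1 + ‖ξ‖ ^ 2)))
    (R : ℝ) (hR : 0 < R)
    (hRsmall : 4 * (2 * π) ^ (-(ℓ:ℝ)) * (∫ ξ in {ξ | R < ‖ξ‖}, μ ξ / ‖ξ‖ ^ 2) < 1)
    (h : EuclideanSpace ℝ (Fin ℓ) → ℂ) (hhmeas : Measurable h) (hh : MemLp h 2 volume)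
    (hhnorm : (∫ ξ, ‖h ξ‖ ^ 2) = 1)
    (hhmom : Integrable (fun ξ => ‖ξ‖ ^ 2 * ‖h ξ‖ ^ 2))
    (hsym : ∀ ξ, starRingEnd ℂ (h ξ) = h (-ξ)) :
    (2 * π) ^ (-(ℓ:ℝ)) * (∫ ξ, ‖∫ ξ', h (ξ - ξ') * h ξ'‖ ^ 2 * μ ξ)
      - (∫ ξ, ‖ξ‖ ^ 2 * ‖h ξ‖ ^ 2)
      ≤ (2 * π) ^ (-(ℓ:ℝ)) * ∫ ξ in {ξ | ‖ξ‖ ≤ R}, μ ξ :=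
  stmt4_general μ hμ0 hDalang R hR hRsmall h hh hhnorm hhmom
end

section
/- Let α ∈ (0,2) and suppose γ : ℝ^ℓ → [0,∞] is measurable, satisfies the scaling relation γ(cx) = c^{−α} γ(x) for all c > 0 and x ∈ ℝ^ℓ, and that the Hartree energy E_H(γ) := sup_{g ∈ G} { ∬ γ(x−y)g²(x)g²(y)dxdy − ∫|∇g|²dx } is finite, where G = { g ∈ W^{1,2}(ℝ^ℓ) : ‖g‖_{L²}=1 }. Then for all g ∈ W^{1,2}(ℝ^ℓ): ∬ γ(x−y) g²(x) g²(y) dx dy ≤ κ ( ∫|g|²dx )^{2−α/2} ( ∫|∇g|²dx )^{α/2}, where κ = (2/α)( (α/(2−α)) E_H(γ) )^{(2−α)/2}. -/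
/-!
Apply the bound defining `E_H` to the `L²`-normalized rescalings `x ↦ s g(θx)` of `g`. With
`N = ∫ g²`, `T = ∫ |∇g|²` and `D = ∬ γ(x-y) g²(x) g²(y)`, the homogeneity of `γ` turns this into
`θ^α D ≤ E_H N² + θ² N T` for every `θ > 0`, and the choice `θ² = α E_H N / ((2 - α) T)`
gives the inequality.
-/

open MeasureTheory Set Real Filter Topology Module
open scoped ENNReal

section RealInequality

variable {α a b c : ℝ}

theorem nonneg_of_forall_rpow_mul_le_add_sq_mul (ha : 0 ≤ a)
    (h : ∀ θ > 0, θ ^ α * a ≤ b + θ ^ 2 * c) : 0 ≤ b := by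
  have hlim : Tendsto (fun θ : ℝ => b + θ ^ 2 * c) (𝓝[>] 0) (𝓝 b) := by
    have hcont : Continuous (fun θ : ℝ => b + θ ^ 2 * c) := by fun_prop
    simpa using (hcont.tendsto 0).mono_left nhdsWithin_le_nhds
  refine ge_of_tendsto hlim ?_
  filter_upwards [self_mem_nhdsWithin] with θ (hθ : 0 < θ)
  exact (mul_nonneg (rpow_nonneg hθ.le α) ha).trans (h θ hθ)

theorem le_of_forall_rpow_mul_le_add_sq_mul_of_pos (hα : α ∈ Ioo (0:ℝ) 2) (hb : 0 < b)
    (hc : 0 < c) (h : ∀ θ > 0, θ ^ α * a ≤ b + θ ^ 2 * c) :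
    a ≤ (2 / α) * ((α / (2 - α)) * b) ^ ((2 - α) / 2) * c ^ (α / 2) := by
  obtain ⟨hα0, hα2⟩ := hα
  have hα2' : 0 < 2 - α := by linarith
  set A := α / (2 - α) * b with hA
  have hApos : 0 < A := by positivity
  have hu : 0 < A / c := by positivity
  -- `θ² = A / c` minimizes `(b + θ² c) / θ^α`
  have hθ := h (√(A / c)) (sqrt_pos.2 hu)
  rw [sq_sqrt hu.le, sqrt_eq_rpow, ← rpow_mul hu.le, div_rpow hApos.le hc.le,
    one_div_mul_eq_div, div_mul_cancel₀ _ hc.ne'] at hθ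
  have hP : 0 < A ^ (α / 2) := rpow_pos_of_pos hApos _
  have hQ : 0 < c ^ (α / 2) := rpow_pos_of_pos hc _
  rw [show (2 - α) / 2 = 1 - α / 2 by ring, rpow_sub hApos, rpow_one]
  rw [div_mul_eq_mul_div, div_le_iff₀ hQ] at hθ
  rw [hA] at hθ ⊢
  field_simp at hθ ⊢
  linarith

theorem le_of_forall_rpow_mul_le_add_sq_mul (hα : α ∈ Ioo (0:ℝ) 2) (ha : 0 ≤ a) (hc : 0 ≤ c)
    (h : ∀ θ > 0, θ ^ α * a ≤ b + θ ^ 2 * c) :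
    a ≤ (2 / α) * ((α / (2 - α)) * b) ^ ((2 - α) / 2) * c ^ (α / 2) := by
  have hb := nonneg_of_forall_rpow_mul_le_add_sq_mul ha h
  set F : ℝ → ℝ := fun ε =>
    (2 / α) * ((α / (2 - α)) * (b + ε)) ^ ((2 - α) / 2) * (c + ε) ^ (α / 2)
  have hF : Continuous F := by
    have hp : 0 ≤ (2 - α) / 2 := by linarith [hα.2]
    have hq : 0 ≤ α / 2 := by linarith [hα.1]
    exact (continuous_const.mul ((continuous_rpow_const hp).comp (by fun_prop))).mul
      ((continuous_rpow_const hq).comp (by fun_prop))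
  have hlim : Tendsto F (𝓝[>] 0) (𝓝 (F 0)) := (hF.tendsto 0).mono_left nhdsWithin_le_nhds
  simp only [F, add_zero] at hlim
  refine ge_of_tendsto hlim ?_
  filter_upwards [self_mem_nhdsWithin] with ε (hε : 0 < ε)
  refine le_of_forall_rpow_mul_le_add_sq_mul_of_pos hα (by linarith) (by linarith)
    fun θ hθ => (h θ hθ).trans ?_
  nlinarith [sq_nonneg θ]

theorem le_of_forall_rpow_mul_le_mul_sq_add_sq_mul_mul {D E N T : ℝ} (hα : α ∈ Ioo (0:ℝ) 2)
    (hD : 0 ≤ D) (hN : 0 < N) (hT : 0 ≤ T)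
    (h : ∀ θ > 0, θ ^ α * D ≤ E * N ^ 2 + θ ^ 2 * (N * T)) :
    D ≤ (2 / α) * ((α / (2 - α)) * E) ^ ((2 - α) / 2) * N ^ (2 - α / 2) * T ^ (α / 2) := by
  have hE : 0 ≤ E :=
    nonneg_of_mul_nonneg_left (nonneg_of_forall_rpow_mul_le_add_sq_mul hD h) (by positivity)
  refine (le_of_forall_rpow_mul_le_add_sq_mul hα hD (by positivity) h).trans_eq ?_
  have hA : 0 ≤ α / (2 - α) * E := mul_nonneg (div_nonneg hα.1.le (sub_nonneg.2 hα.2.le)) hE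
  rw [← mul_assoc, mul_rpow hA (by positivity), mul_rpow hN.le hT, ← rpow_natCast,
    ← rpow_mul hN.le, show 2 - α / 2 = (2:ℕ) * ((2 - α) / 2) + α / 2 by push_cast; ring,
    rpow_add hN]
  ring

end RealInequality

theorem norm_fderiv_const_mul_comp_smul {E : Type*} [NormedAddCommGroup E] [NormedSpace ℝ E]
    (g : E → ℝ) (s θ : ℝ) (x : E) :
    ‖fderiv ℝ (fun x => s * g (θ • x)) x‖ = |s| * |θ| * ‖fderiv ℝ g (θ • x)‖ := by
  have hfun : (fun x => s * g (θ • x)) = s • fun x => g (θ • x) := rfl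
  rw [hfun, fderiv_const_smul_field, Pi.smul_apply, fderiv_comp_smul, norm_smul, norm_smul,
    norm_eq_abs, norm_eq_abs, mul_assoc]

theorem MeasureTheory.MemLp.comp_smul {E F : Type*} [NormedAddCommGroup E] [NormedSpace ℝ E]
    [FiniteDimensional ℝ E] [MeasurableSpace E] [BorelSpace E] [NormedAddCommGroup F]
    {μ : Measure E} [μ.IsAddHaarMeasure] {f : E → F} {p : ℝ≥0∞} (hf : MemLp f p μ) {R : ℝ}
    (hR : R ≠ 0) : MemLp (fun x => f (R • x)) p μ := by
  have hfR : MemLp f p (μ.map (R • ·)) := by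
    rw [Measure.map_addHaar_smul μ hR]
    exact hf.smul_measure ENNReal.ofReal_ne_top
  exact hfR.comp_of_map (by fun_prop)

section Hartree

variable {E : Type*} [NormedAddCommGroup E] [MeasurableSpace E]

noncomputable def hartreeInteraction (μ : Measure E) (γ g : E → ℝ) : ℝ :=
  ∫ x, ∫ y, γ (x - y) * g x ^ 2 * g y ^ 2 ∂μ ∂μ

theorem hartreeInteraction_nonneg (μ : Measure E) {γ : E → ℝ} (hγ : ∀ x, 0 ≤ γ x) (g : E → ℝ) :
    0 ≤ hartreeInteraction μ γ g :=
  integral_nonneg fun _ => integral_nonneg fun _ =>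
    mul_nonneg (mul_nonneg (hγ _) (sq_nonneg _)) (sq_nonneg _)

theorem hartreeInteraction_eq_zero_of_integral_sq_eq_zero {μ : Measure E} (γ : E → ℝ)
    {g : E → ℝ} (hg : Integrable (fun x => g x ^ 2) μ) (h : ∫ x, g x ^ 2 ∂μ = 0) :
    hartreeInteraction μ γ g = 0 := by
  have hg0 : (fun x => g x ^ 2) =ᵐ[μ] 0 :=
    (integral_eq_zero_iff_of_nonneg (fun x => sq_nonneg (g x)) hg).1 h
  have hinner : ∀ x, ∫ y, γ (x - y) * g x ^ 2 * g y ^ 2 ∂μ = 0 := fun x =>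
    integral_eq_zero_of_ae <| hg0.mono fun y (hy : g y ^ 2 = 0) => by
      simp only [hy, mul_zero, Pi.zero_apply]
  simp only [hartreeInteraction, hinner, integral_zero]

variable [NormedSpace ℝ E] [FiniteDimensional ℝ E] [BorelSpace E] (μ : Measure E)
  [μ.IsAddHaarMeasure]

theorem integral_integral_comp_smul_of_nonneg (K : E → E → ℝ) {θ : ℝ} (hθ : 0 ≤ θ) :
    ∫ x, ∫ y, K (θ • x) (θ • y) ∂μ ∂μ
      = ((θ ^ finrank ℝ E)⁻¹) ^ 2 * ∫ x, ∫ y, K x y ∂μ ∂μ := by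
  simp only [Measure.integral_comp_smul_of_nonneg μ (K _) θ (hR := hθ), smul_eq_mul,
    integral_const_mul]
  rw [Measure.integral_comp_smul_of_nonneg μ (fun x => ∫ y, K x y ∂μ) θ (hR := hθ), smul_eq_mul]
  ring

theorem integral_sq_const_mul_comp_smul (g : E → ℝ) (s : ℝ) {θ : ℝ} (hθ : 0 ≤ θ) :
    ∫ x, (s * g (θ • x)) ^ 2 ∂μ = s ^ 2 * (θ ^ finrank ℝ E)⁻¹ * ∫ x, g x ^ 2 ∂μ := by
  simp only [mul_pow, integral_const_mul,
    Measure.integral_comp_smul_of_nonneg μ (fun x => g x ^ 2) θ (hR := hθ), smul_eq_mul]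
  ring

theorem integral_norm_fderiv_sq_const_mul_comp_smul (g : E → ℝ) (s : ℝ) {θ : ℝ} (hθ : 0 ≤ θ) :
    ∫ x, ‖fderiv ℝ (fun x => s * g (θ • x)) x‖ ^ 2 ∂μ
      = s ^ 2 * θ ^ 2 * (θ ^ finrank ℝ E)⁻¹ * ∫ x, ‖fderiv ℝ g x‖ ^ 2 ∂μ := by
  simp only [norm_fderiv_const_mul_comp_smul, mul_pow, sq_abs, integral_const_mul,
    Measure.integral_comp_smul_of_nonneg μ (fun x => ‖fderiv ℝ g x‖ ^ 2) θ (hR := hθ),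
    smul_eq_mul]
  ring

theorem MeasureTheory.Integrable.norm_fderiv_sq_const_mul_comp_smul {g : E → ℝ}
    (hg : Integrable (fun x => ‖fderiv ℝ g x‖ ^ 2) μ) (s : ℝ) {θ : ℝ} (hθ : θ ≠ 0) :
    Integrable (fun x => ‖fderiv ℝ (fun x => s * g (θ • x)) x‖ ^ 2) μ := by
  simp only [norm_fderiv_const_mul_comp_smul, mul_pow]
  exact (hg.comp_smul hθ).const_mul _

variable {μ} in
theorem hartreeInteraction_const_mul_comp_smul {α : ℝ} {γ : E → ℝ}
    (hγ : ∀ c > (0:ℝ), ∀ x, γ (c • x) = c ^ (-α) * γ x) (g : E → ℝ) (s : ℝ) {θ : ℝ}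
    (hθ : 0 < θ) :
    hartreeInteraction μ γ (fun x => s * g (θ • x))
      = s ^ 4 * θ ^ α * ((θ ^ finrank ℝ E)⁻¹) ^ 2 * hartreeInteraction μ γ g := by
  have hγθ : ∀ x y : E, γ (x - y) = θ ^ α * γ (θ • x - θ • y) := fun x y => by
    rw [← smul_sub, hγ θ hθ, ← mul_assoc, ← rpow_add hθ, add_neg_cancel, rpow_zero, one_mul]
  calc hartreeInteraction μ γ (fun x => s * g (θ • x))
      = ∫ x, ∫ y, s ^ 4 * θ ^ α
          * (γ (θ • x - θ • y) * g (θ • x) ^ 2 * g (θ • y) ^ 2) ∂μ ∂μ := by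
        unfold hartreeInteraction
        congr 1; ext x; congr 1; ext y
        rw [hγθ x y]
        ring
    _ = s ^ 4 * θ ^ α * ((θ ^ finrank ℝ E)⁻¹) ^ 2 * hartreeInteraction μ γ g := by
        simp only [integral_const_mul]
        rw [integral_integral_comp_smul_of_nonneg μ (fun x y => γ (x - y) * g x ^ 2 * g y ^ 2)
          hθ.le, hartreeInteraction]
        ring

theorem rpow_mul_hartreeInteraction_le {α EH : ℝ} {γ : E → ℝ}
    (hγ : ∀ c > (0:ℝ), ∀ x, γ (c • x) = c ^ (-α) * γ x)
    (hEH : ∀ g : E → ℝ, Differentiable ℝ g → MemLp g 2 μ → ∫ x, g x ^ 2 ∂μ = 1 →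
      Integrable (fun x => ‖fderiv ℝ g x‖ ^ 2) μ →
      hartreeInteraction μ γ g - ∫ x, ‖fderiv ℝ g x‖ ^ 2 ∂μ ≤ EH)
    {g : E → ℝ} (hg : Differentiable ℝ g) (hg2 : MemLp g 2 μ)
    (hgrad : Integrable (fun x => ‖fderiv ℝ g x‖ ^ 2) μ) (hN : 0 < ∫ x, g x ^ 2 ∂μ)
    {θ : ℝ} (hθ : 0 < θ) :
    θ ^ α * hartreeInteraction μ γ g
      ≤ EH * (∫ x, g x ^ 2 ∂μ) ^ 2
        + θ ^ 2 * ((∫ x, g x ^ 2 ∂μ) * ∫ x, ‖fderiv ℝ g x‖ ^ 2 ∂μ) := by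
  set N := ∫ x, g x ^ 2 ∂μ with hN_def
  set s := √(θ ^ finrank ℝ E / N)
  have hs : s ^ 2 = θ ^ finrank ℝ E / N := sq_sqrt (by positivity)
  have hnorm : ∫ x, (s * g (θ • x)) ^ 2 ∂μ = 1 := by
    rw [integral_sq_const_mul_comp_smul μ g s hθ.le, ← hN_def, hs]
    field_simp
  have h := hEH (fun x => s * g (θ • x)) (by fun_prop) ((hg2.comp_smul hθ.ne').const_mul s)
    hnorm (hgrad.norm_fderiv_sq_const_mul_comp_smul μ s hθ.ne')
  rw [hartreeInteraction_const_mul_comp_smul hγ g s hθ,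
    integral_norm_fderiv_sq_const_mul_comp_smul μ g s hθ.le, show s ^ 4 = (s ^ 2) ^ 2 by ring,
    hs] at h
  field_simp at h
  linarith

end Hartree

/-- If `γ ≥ 0` is `(−α)`-homogeneous and the Hartree energy is finite (bounded above by `EH`),
then the interpolation inequality
`∬ γ(x−y)g²(x)g²(y) ≤ κ (∫ g²)^{2−α/2} (∫ |∇g|²)^{α/2}` holds for all `g ∈ W^{1,2}`,
with `κ = (2/α)((α/(2−α)) EH)^{(2−α)/2}`. -/
theorem stmt6 {ℓ : ℕ} (α : ℝ) (hα : α ∈ Ioo (0:ℝ) 2)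
    (γ : EuclideanSpace ℝ (Fin ℓ) → ℝ) (hγ0 : ∀ x, 0 ≤ γ x)
    (hscal : ∀ c > (0:ℝ), ∀ x, γ (c • x) = c ^ (-α) * γ x)
    (EH : ℝ)
    (hEH : ∀ g : EuclideanSpace ℝ (Fin ℓ) → ℝ, Differentiable ℝ g → MemLp g 2 volume →
      (∫ x, (g x) ^ 2) = 1 → Integrable (fun x => ‖fderiv ℝ g x‖ ^ 2) →
      (∫ x, ∫ y, γ (x - y) * (g x) ^ 2 * (g y) ^ 2) - (∫ x, ‖fderiv ℝ g x‖ ^ 2) ≤ EH) :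
    ∀ g : EuclideanSpace ℝ (Fin ℓ) → ℝ, Differentiable ℝ g → MemLp g 2 volume →
      Integrable (fun x => ‖fderiv ℝ g x‖ ^ 2) →
      (∫ x, ∫ y, γ (x - y) * (g x) ^ 2 * (g y) ^ 2)
        ≤ (2/α) * ((α/(2-α)) * EH) ^ ((2-α)/2)
          * (∫ x, (g x) ^ 2) ^ (2 - α/2) * (∫ x, ‖fderiv ℝ g x‖ ^ 2) ^ (α/2) := by
  intro g hg hg2 hgrad
  change hartreeInteraction volume γ g ≤ _
  have hN0 : 0 ≤ ∫ x, g x ^ 2 := integral_nonneg fun x => sq_nonneg _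
  rcases hN0.eq_or_lt with hN | hN
  · rw [hartreeInteraction_eq_zero_of_integral_sq_eq_zero γ hg2.integrable_sq hN.symm, ← hN,
      zero_rpow (by linarith [hα.2]), mul_zero, zero_mul]
  · exact le_of_forall_rpow_mul_le_mul_sq_add_sq_mul_mul hα (hartreeInteraction_nonneg _ hγ0 g)
      hN (integral_nonneg fun _ => sq_nonneg _)
      fun θ hθ => rpow_mul_hartreeInteraction_le volume hscal hEH hg hg2 hgrad hN hθ
end
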